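/- Fix ℓ ≥ 1 and let λ, μ be partitions with core(λ) = core(μ). If for every i ∈ {0,…,ℓ−1} the quotient components satisfy |λ^i| = |μ^i| and μ^i ⊴ λ^i in dominance order, then |μ| = |λ| and μ ⊴ λ in dominance order. -/

import Mathlib

/-- A partition: a weakly decreasing, eventually zero sequence of naturals;
`part k` is the `(k+1)`-st part `λ_{k+1}`. -/
structure PartitionSeq where
  part : ℕ → ℕ
  antitone : ∀ a b : ℕ, a ≤ b → part b ≤ part a
  eventually_zero : ∃ N, ∀ n, N ≤ n → part n = 0

namespace Wreath

attribute [local instance] Classical.propDecidable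

/-- The conjugate partition: `conj lam a = ᵗλ_a` for `a ≥ 1`. -/
noncomputable def conj (lam : PartitionSeq) (a : ℕ) : ℕ :=
  Set.ncard {k : ℕ | a ≤ lam.part k}

/-- The Maya diagram of a partition: value `+1` at `j` iff `j = ᵗλ_a − a` for some `a ≥ 1`. -/
noncomputable def mayaFun (lam : PartitionSeq) : ℤ → ℤ := fun j =>
  if ∃ a : ℕ, j = (conj lam (a + 1) : ℤ) - (a + 1 : ℤ) then 1 else -1

/-- `f : ℤ → ℤ` is a Maya diagram: values `±1`, eventually `-1` to the right (large `j`),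
eventually `+1` to the left (small `j`). -/
def IsMayaFun (f : ℤ → ℤ) : Prop :=
  (∀ j, f j = 1 ∨ f j = -1) ∧ (∃ N : ℤ, ∀ j, N ≤ j → f j = -1) ∧
    (∃ N : ℤ, ∀ j, j ≤ N → f j = 1)

/-- The charge `#{j < 0 : f j = −1} − #{j ≥ 0 : f j = 1}`. -/
noncomputable def chargeFun (f : ℤ → ℤ) : ℤ :=
  (Set.ncard {j : ℤ | j < 0 ∧ f j = -1} : ℤ) - (Set.ncard {j : ℤ | 0 ≤ j ∧ f j = 1} : ℤ)

def emptyPartition : PartitionSeq :=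
  ⟨fun _ => 0, fun _ _ _ => le_rfl, ⟨0, fun _ _ => rfl⟩⟩

/-- The partition whose Maya diagram is `f` (junk value if there is none). -/
noncomputable def partitionOfMaya (f : ℤ → ℤ) : PartitionSeq :=
  if h : ∃ lam : PartitionSeq, mayaFun lam = f then h.choose else emptyPartition

/-- The charge `c_i(λ)` of the `i`-th quotient Maya diagram `j ↦ m(λ)(i + jℓ)`. -/
noncomputable def chargeQuot (ℓ : ℕ) (lam : PartitionSeq) (i : ℤ) : ℤ :=
  chargeFun fun j => mayaFun lam (i + j * (ℓ : ℤ))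

/-- The `i`-th quotient component `λ^i`: the partition whose Maya diagram is
`j ↦ m_i(λ)(j − c_i(λ))`. -/
noncomputable def quotComp (ℓ : ℕ) (lam : PartitionSeq) (i : ℤ) : PartitionSeq :=
  partitionOfMaya fun j => mayaFun lam (i + (j - chargeQuot ℓ lam i) * (ℓ : ℤ))

/-- The `ℓ`-core of `λ`: the partition whose Maya diagram has value `−1` at `i + jℓ`
(`0 ≤ i < ℓ`) exactly when `j ≥ −c_i(λ)`. -/
noncomputable def coreOf (ℓ : ℕ) (lam : PartitionSeq) : PartitionSeq :=
  partitionOfMaya fun j =>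
    if -(chargeQuot ℓ lam (Int.emod j (ℓ : ℤ))) ≤ Int.ediv j (ℓ : ℤ) then -1 else 1

/-- Membership of the node `x = (a,b)` in the Young diagram of `lam`:
`1 ≤ a`, `1 ≤ b`, `a ≤ λ_b`.  The content of `(a,b)` is `b − a`. -/
def Partition.memYD (lam : PartitionSeq) (x : ℤ × ℤ) : Prop :=
  1 ≤ x.1 ∧ 1 ≤ x.2 ∧ x.1 ≤ (lam.part (x.2 - 1).toNat : ℤ)

/-- Containment of Young diagrams. -/
def Sub (lam mu : PartitionSeq) : Prop := ∀ x, Partition.memYD lam x → Partition.memYD mu x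

/-- Membership in the skew diagram `μ∖λ`. -/
def SkewMem (lam mu : PartitionSeq) (x : ℤ × ℤ) : Prop :=
  Partition.memYD mu x ∧ ¬ Partition.memYD lam x

/-- The number of nodes of `μ∖λ`. -/
noncomputable def skewSize (lam mu : PartitionSeq) : ℕ := Set.ncard {x | SkewMem lam mu x}

/-- The size `|λ|`. -/
noncomputable def Partition.size (lam : PartitionSeq) : ℕ := Set.ncard {x | Partition.memYD lam x}

/-- Edge-adjacency of nodes. -/
def adjacent (x y : ℤ × ℤ) : Prop :=
  (x.1 = y.1 ∧ (x.2 = y.2 + 1 ∨ y.2 = x.2 + 1)) ∨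
  (x.2 = y.2 ∧ (x.1 = y.1 + 1 ∨ y.1 = x.1 + 1))

/-- `μ∖λ` is a border strip: `λ ⊆ μ`, nonempty, connected through edge-adjacent nodes,
and containing no 2×2 block. -/
def IsBorderStrip (lam mu : PartitionSeq) : Prop :=
  Sub lam mu ∧ (∃ x, SkewMem lam mu x) ∧
  (∀ x y, SkewMem lam mu x → SkewMem lam mu y →
    Relation.ReflTransGen (fun u v => SkewMem lam mu u ∧ SkewMem lam mu v ∧ adjacent u v) x y) ∧
  ¬ ∃ a b : ℤ, SkewMem lam mu (a, b) ∧ SkewMem lam mu (a + 1, b) ∧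
      SkewMem lam mu (a, b + 1) ∧ SkewMem lam mu (a + 1, b + 1)

/-- An `ℓ`-core: a partition from which no border strip of `ℓ` nodes can be removed. -/
def IsCore (ℓ : ℕ) (lam : PartitionSeq) : Prop :=
  ¬ ∃ mu : PartitionSeq, IsBorderStrip mu lam ∧ skewSize mu lam = ℓ

/-- Dominance order (on partitions of the same size): `Dom μ λ` means `μ ⊴ λ`. -/
def Dom (mu lam : PartitionSeq) : Prop :=
  Partition.size mu = Partition.size lam ∧
  ∀ k : ℕ, ∑ b ∈ Finset.range k, mu.part b ≤ ∑ b ∈ Finset.range k, lam.part b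

/-- `x` is the node of `μ∖λ` of largest content (the initial node of a strip). -/
def IsMaxContentNode (lam mu : PartitionSeq) (x : ℤ × ℤ) : Prop :=
  SkewMem lam mu x ∧ ∀ y, SkewMem lam mu y → y.2 - y.1 ≤ x.2 - x.1

/-- `x` is the node of `μ∖λ` of smallest content (the final node of a strip). -/
def IsMinContentNode (lam mu : PartitionSeq) (x : ℤ × ℤ) : Prop :=
  SkewMem lam mu x ∧ ∀ y, SkewMem lam mu y → x.2 - x.1 ≤ y.2 - y.1

/-- Add `1` to each of the first `k` parts (append a column of height `k`). -/
def addColParts (k : ℕ) (f : ℕ → ℕ) : ℕ → ℕ := fun r => if r < k then f r + 1 else f r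

/-- The number of (nonzero) rows of a partition. -/
noncomputable def numRows (nu : PartitionSeq) : ℕ := Set.ncard {r : ℕ | 0 < nu.part r}

/-- Append a new final row of length `k` after `len` rows. -/
def addRowParts (k len : ℕ) (f : ℕ → ℕ) : ℕ → ℕ :=
  fun r => if r < len then f r else if r = len then k else 0

/-- One column-addition step: `μ` is obtained from `ν` by adding, in component `i` of the
`ℓ`-quotient, a new column of height `k` no taller than any existing column. -/
def IsColStep (ℓ : ℕ) (nu mu : PartitionSeq) (i k : ℕ) : Prop :=
  i < ℓ ∧ 1 ≤ k ∧
  (∀ a : ℕ, 1 ≤ a → (a : ℕ) ≤ (quotComp ℓ nu (i : ℤ)).part 0 →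
    k ≤ conj (quotComp ℓ nu (i : ℤ)) a) ∧
  coreOf ℓ mu = coreOf ℓ nu ∧
  (∀ i' : ℕ, i' < ℓ → i' ≠ i → quotComp ℓ mu (i' : ℤ) = quotComp ℓ nu (i' : ℤ)) ∧
  (quotComp ℓ mu (i : ℤ)).part = addColParts k ((quotComp ℓ nu (i : ℤ)).part)

/-- One row-addition step: `μ` is obtained from `ν` by adding, in component `i` of the
`ℓ`-quotient, a new final row of length `k` no longer than any existing row. -/
def IsRowStep (ℓ : ℕ) (nu mu : PartitionSeq) (i k : ℕ) : Prop :=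
  i < ℓ ∧ 1 ≤ k ∧
  (∀ r : ℕ, 0 < (quotComp ℓ nu (i : ℤ)).part r → k ≤ (quotComp ℓ nu (i : ℤ)).part r) ∧
  coreOf ℓ mu = coreOf ℓ nu ∧
  (∀ i' : ℕ, i' < ℓ → i' ≠ i → quotComp ℓ mu (i' : ℤ) = quotComp ℓ nu (i' : ℤ)) ∧
  (quotComp ℓ mu (i : ℤ)).part =
    addRowParts k (numRows (quotComp ℓ nu (i : ℤ))) ((quotComp ℓ nu (i : ℤ)).part)

/-- A column-addition sequence for `λ`. -/
def IsColSeq (ℓ : ℕ) (lam : PartitionSeq) (N : ℕ) (seq : ℕ → PartitionSeq) : Prop :=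
  seq 0 = coreOf ℓ lam ∧ seq N = lam ∧
  ∀ t, t < N → ∃ i k, IsColStep ℓ (seq t) (seq (t + 1)) i k

/-- A row-addition sequence for `λ`. -/
def IsRowSeq (ℓ : ℕ) (lam : PartitionSeq) (N : ℕ) (seq : ℕ → PartitionSeq) : Prop :=
  seq 0 = coreOf ℓ lam ∧ seq N = lam ∧
  ∀ t, t < N → ∃ i k, IsRowStep ℓ (seq t) (seq (t + 1)) i k

/-- Left-to-right order on a column-addition sequence: for `1 ≤ r < s ≤ N` the content of the
initial node of the `r`-th strip is strictly greater than the content of the final node of the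
`s`-th strip. -/
def LeftToRight (N : ℕ) (seq : ℕ → PartitionSeq) : Prop :=
  ∀ r s, 1 ≤ r → r < s → s ≤ N → ∀ x y,
    IsMaxContentNode (seq (r - 1)) (seq r) x →
    IsMinContentNode (seq (s - 1)) (seq s) y →
    y.2 - y.1 < x.2 - x.1

/-- Right-to-left order on a row-addition sequence: for `1 ≤ r < s ≤ N` the content of the
final node of the `r`-th strip is strictly less than the content of the final node of the
`s`-th strip. -/
def RightToLeft (N : ℕ) (seq : ℕ → PartitionSeq) : Prop :=
  ∀ r s, 1 ≤ r → r < s → s ≤ N → ∀ x y,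
    IsMinContentNode (seq (r - 1)) (seq r) x →
    IsMinContentNode (seq (s - 1)) (seq s) y →
    x.2 - x.1 < y.2 - y.1

/-- `x` is an addable node of `λ`. -/
def Addable (lam : PartitionSeq) (x : ℤ × ℤ) : Prop :=
  ¬ Partition.memYD lam x ∧
    ∃ mu : PartitionSeq, ∀ y, Partition.memYD mu y ↔ (Partition.memYD lam y ∨ y = x)

/-- `x` is a removable node of `λ`. -/
def Removable (lam : PartitionSeq) (x : ℤ × ℤ) : Prop :=
  Partition.memYD lam x ∧
    ∃ mu : PartitionSeq, ∀ y, Partition.memYD mu y ↔ (Partition.memYD lam y ∧ y ≠ x)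

end Wreath

open Wreath

/-!
For a Maya diagram `f` let `W_f(M) = ∑_{f j = -1} (M - j)⁺` (`mayaWeight`). The positions where
`m(λ) = -1` are the numbers `b - λ_{b+1}`, so `W_{m(λ)}(M) = ∑_b (M - b + λ_{b+1})⁺`. The summands
decrease in `b`, so this is the largest of the partial sums `∑_{b<k} (M - b + λ_{b+1})`, attained
where they change sign; hence the partial sums of `μ` are bounded by those of `λ` iff
`W_{m(μ)} ≤ W_{m(λ)}` everywhere, and for large `M`, `W_{m(λ)}(M) = |λ| + ∑_{b<M} (M - b)`.

Sorting the positions `j = i + qℓ` by residue and writing `M - i = sℓ + r` with `0 ≤ r < ℓ`, the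
identity `(M - i - qℓ)⁺ = (ℓ - r)(s - q)⁺ + r(s + 1 - q)⁺` gives
`W_{m(λ)}(M) = ∑_i ((ℓ - r) W_{m(λ^i)}(s + c_i) + r W_{m(λ^i)}(s + c_i + 1))`.
The coefficients are nonnegative and the charges `c_i` are determined by the core, so dominance
and equality of sizes pass from the quotients to `λ` and `μ`.
-/

open Finset Filter

namespace Wreath

lemma StrictMono.ncard_setOf_lt_mem_range {e : ℕ → ℤ} (he : StrictMono e) (b : ℕ) :
    {j | j < e b ∧ j ∈ Set.range e}.ncard = b := by
  have : {j | j < e b ∧ j ∈ Set.range e} = e '' Set.Iio b := by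
    ext j
    constructor
    · rintro ⟨hj, a, rfl⟩
      exact ⟨a, he.lt_iff_lt.1 hj, rfl⟩
    · rintro ⟨a, ha, rfl⟩
      exact ⟨he ha, a, rfl⟩
  rw [this, Set.ncard_image_of_injective _ he.injective, Set.ncard_Iio_nat]

section MayaOfPartition

variable (ν : PartitionSeq)

def negPos (b : ℕ) : ℤ := b - ν.part b

lemma negPos_strictMono : StrictMono (negPos ν) :=
  strictMono_nat_of_lt_succ fun b => by
    have := ν.antitone b (b + 1) b.le_succ
    simp only [negPos]
    push_cast
    omega

lemma negPos_le (b : ℕ) : negPos ν b ≤ b := by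
  simp [negPos]

lemma negPos_of_le {N b : ℕ} (hN : ∀ n, N ≤ n → ν.part n = 0) (hb : N ≤ b) :
    negPos ν b = b := by
  simp [negPos, hN b hb]

lemma exists_negPos_cut (M : ℤ) :
    ∃ k, (∀ b < k, negPos ν b < M) ∧ ∀ b, k ≤ b → M ≤ negPos ν b := by
  have hex : ∃ b, M ≤ negPos ν b := ⟨(M + ν.part 0).toNat, by
    have := ν.antitone 0 (M + ν.part 0).toNat (Nat.zero_le _)
    simp only [negPos]
    omega⟩
  exact ⟨Nat.find hex, fun b hb => not_le.1 (Nat.find_min hex hb),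
    fun b hb => (Nat.find_spec hex).trans ((negPos_strictMono ν).monotone hb)⟩

lemma conj_eq_of_forall {a t : ℕ} (h : ∀ k, a ≤ ν.part k ↔ k < t) : conj ν a = t := by
  rw [conj, show {k | a ≤ ν.part k} = Set.Iio t from Set.ext h, Set.ncard_Iio_nat]

lemma le_part_iff_lt_conj {a : ℕ} (ha : 0 < a) (k : ℕ) : a ≤ ν.part k ↔ k < conj ν a := by
  obtain ⟨N, hN⟩ := ν.eventually_zero
  have hex : ∃ k, ν.part k < a := ⟨N, by rw [hN N le_rfl]; exact ha⟩
  have hcut : ∀ k, a ≤ ν.part k ↔ k < Nat.find hex := fun k => by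
    refine ⟨fun hk => ?_, fun hk => not_lt.1 (Nat.find_min hex hk)⟩
    by_contra! h
    have := ν.antitone _ _ h
    have := Nat.find_spec hex
    omega
  rw [conj_eq_of_forall ν hcut, hcut]

lemma exists_conj_sub_iff (j : ℤ) :
    (∃ a : ℕ, j = (conj ν (a + 1) : ℤ) - (a + 1 : ℤ)) ↔ j ∉ Set.range (negPos ν) := by
  constructor
  · rintro ⟨a, rfl⟩ ⟨b, hb⟩
    have := le_part_iff_lt_conj ν (a := a + 1) (by omega) b
    simp only [negPos] at hb
    omega
  · intro hj
    obtain ⟨t, hbelow, habove⟩ := exists_negPos_cut ν (j + 1)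
    have hbelow' : ∀ k < t, negPos ν k < j := fun k hk =>
      lt_of_le_of_ne (by linarith [hbelow k hk]) fun h => hj ⟨k, h⟩
    have ht := habove t le_rfl
    simp only [negPos] at ht
    have hconj : conj ν (t - j).toNat = t := conj_eq_of_forall ν fun k => by
      constructor
      · intro hk
        by_contra! h
        have := ν.antitone _ _ h
        omega
      · intro hk
        have hlast := hbelow' (t - 1) (by omega)
        have := ν.antitone k (t - 1) (by omega)
        simp only [negPos] at hlast
        push_cast [Nat.cast_sub (show 1 ≤ t by omega)] at hlast
        omega
    refine ⟨(t - j).toNat - 1, ?_⟩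
    rw [Nat.sub_add_cancel (by omega), hconj]
    omega

lemma mayaFun_eq_one_iff (j : ℤ) : mayaFun ν j = 1 ↔ j ∉ Set.range (negPos ν) := by
  rw [mayaFun, ← exists_conj_sub_iff]
  split_ifs with hj <;> simp [hj]

lemma mayaFun_eq_neg_one_iff (j : ℤ) : mayaFun ν j = -1 ↔ j ∈ Set.range (negPos ν) := by
  rw [mayaFun, ← not_iff_not, ← exists_conj_sub_iff]
  split_ifs with hj <;> simp [hj]

lemma isMayaFun_mayaFun : IsMayaFun (mayaFun ν) := by
  obtain ⟨N, hN⟩ := ν.eventually_zero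
  refine ⟨fun j => ?_, ⟨N, fun j hj => ?_⟩, ⟨-ν.part 0 - 1, fun j hj => ?_⟩⟩
  · by_cases hj : j ∈ Set.range (negPos ν)
    · exact Or.inr ((mayaFun_eq_neg_one_iff ν j).2 hj)
    · exact Or.inl ((mayaFun_eq_one_iff ν j).2 hj)
  · exact (mayaFun_eq_neg_one_iff ν j).2 ⟨j.toNat, by rw [negPos_of_le ν hN (by omega)]; omega⟩
  · refine (mayaFun_eq_one_iff ν j).2 ?_
    rintro ⟨b, rfl⟩
    have := ν.antitone 0 b (Nat.zero_le b)
    simp only [negPos] at hj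
    omega

end MayaOfPartition

section MayaFunctions

variable {f : ℤ → ℤ}

lemma IsMayaFun.finite_lt (hf : IsMayaFun f) (d : ℤ) : {j | j < d ∧ f j = -1}.Finite := by
  obtain ⟨N, hN⟩ := hf.2.2
  refine (Set.finite_Ioo N d).subset fun j ⟨hjd, hj⟩ => ⟨?_, hjd⟩
  by_contra! h
  have := hN j h
  omega

lemma IsMayaFun.finite_ge (hf : IsMayaFun f) (d : ℤ) : {j | d ≤ j ∧ f j = 1}.Finite := by
  obtain ⟨N, hN⟩ := hf.2.1
  refine (Set.finite_Ico d N).subset fun j ⟨hjd, hj⟩ => ⟨hjd, ?_⟩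
  by_contra! h
  have := hN j h
  omega

lemma IsMayaFun.comp_sub (hf : IsMayaFun f) (c : ℤ) : IsMayaFun fun j => f (j - c) := by
  obtain ⟨hv, ⟨N₁, hN₁⟩, ⟨N₂, hN₂⟩⟩ := hf
  exact ⟨fun j => hv _, ⟨N₁ + c, fun j hj => hN₁ _ (by omega)⟩,
    ⟨N₂ + c, fun j hj => hN₂ _ (by omega)⟩⟩

lemma IsMayaFun.comp_add_mul (hf : IsMayaFun f) {ℓ : ℕ} [NeZero ℓ] (i : ℤ) :
    IsMayaFun fun q => f (i + q * ℓ) := by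
  obtain ⟨hv, ⟨N₁, hN₁⟩, ⟨N₂, hN₂⟩⟩ := hf
  have hℓ : (1 : ℤ) ≤ ℓ := by exact_mod_cast NeZero.one_le
  refine ⟨fun q => hv _, ⟨|N₁ - i|, fun q hq => hN₁ _ ?_⟩, ⟨-|N₂ - i|, fun q hq => hN₂ _ ?_⟩⟩
  · have : q ≤ q * ℓ := le_mul_of_one_le_right (le_trans (abs_nonneg _) hq) hℓ
    have := le_abs_self (N₁ - i)
    omega
  · have : q * ℓ ≤ q := mul_le_of_one_le_right (le_trans hq (neg_nonpos.2 (abs_nonneg _))) hℓ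
    have := neg_abs_le (N₂ - i)
    omega

lemma IsMayaFun.ncard_sub_ncard_succ (hf : IsMayaFun f) (d : ℤ) :
    ({j | j < d + 1 ∧ f j = -1}.ncard : ℤ) - {j | d + 1 ≤ j ∧ f j = 1}.ncard
      = ({j | j < d ∧ f j = -1}.ncard : ℤ) - {j | d ≤ j ∧ f j = 1}.ncard + 1 := by
  rcases hf.1 d with hd | hd
  · have hlt : {j | j < d + 1 ∧ f j = -1} = {j | j < d ∧ f j = -1} := by
      ext j; simp only [Set.mem_ofPred_eq]; grind
    have hge : {j | d ≤ j ∧ f j = 1} = insert d {j | d + 1 ≤ j ∧ f j = 1} := by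
      ext j; simp only [Set.mem_ofPred_eq, Set.mem_insert_iff]; grind
    rw [hlt, hge, Set.ncard_insert_of_notMem (by simp) (hf.finite_ge _)]
    push_cast
    ring
  · have hlt : {j | j < d + 1 ∧ f j = -1} = insert d {j | j < d ∧ f j = -1} := by
      ext j; simp only [Set.mem_ofPred_eq, Set.mem_insert_iff]; grind
    have hge : {j | d ≤ j ∧ f j = 1} = {j | d + 1 ≤ j ∧ f j = 1} := by
      ext j; simp only [Set.mem_ofPred_eq]; grind
    rw [hlt, hge, Set.ncard_insert_of_notMem (by simp) (hf.finite_lt _)]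
    push_cast
    ring

lemma IsMayaFun.ncard_sub_ncard (hf : IsMayaFun f) (d : ℤ) :
    ({j | j < d ∧ f j = -1}.ncard : ℤ) - {j | d ≤ j ∧ f j = 1}.ncard = chargeFun f + d := by
  induction d using Int.induction_on with
  | zero => simp [chargeFun]
  | succ k ih => rw [hf.ncard_sub_ncard_succ, ih]; ring
  | pred k ih =>
    have := hf.ncard_sub_ncard_succ (-k - 1)
    rw [sub_add_cancel] at this
    linarith

lemma ncard_setOf_comp_sub (p : ℤ → Prop) (c : ℤ) : {j | p (j - c)}.ncard = {j | p j}.ncard :=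
  Set.ncard_preimage_of_injective_subset_range (sub_left_injective (b := c))
    fun j _ => ⟨j + c, add_sub_cancel_right j c⟩

lemma IsMayaFun.chargeFun_comp_sub (hf : IsMayaFun f) (c : ℤ) :
    chargeFun (fun j => f (j - c)) = chargeFun f - c := by
  have hlt := ncard_setOf_comp_sub (fun j => j < -c ∧ f j = -1) c
  have hge := ncard_setOf_comp_sub (fun j => -c ≤ j ∧ f j = 1) c
  simp only [sub_lt_iff_lt_add, neg_add_cancel, le_sub_iff_add_le] at hlt hge
  rw [chargeFun, hlt, hge, hf.ncard_sub_ncard]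
  ring

lemma chargeFun_mayaFun (ν : PartitionSeq) : chargeFun (mayaFun ν) = 0 := by
  obtain ⟨N, hN⟩ := ν.eventually_zero
  have hlt : {j | j < negPos ν N ∧ mayaFun ν j = -1}.ncard = N := by
    simpa only [← mayaFun_eq_neg_one_iff] using (negPos_strictMono ν).ncard_setOf_lt_mem_range N
  have hge : {j | negPos ν N ≤ j ∧ mayaFun ν j = 1} = ∅ := by
    refine Set.eq_empty_of_forall_notMem fun j ⟨hj, hfj⟩ => (mayaFun_eq_one_iff ν j).1 hfj ?_
    rw [negPos_of_le ν hN le_rfl] at hj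
    exact ⟨j.toNat, by rw [negPos_of_le ν hN (by omega)]; omega⟩
  have := (isMayaFun_mayaFun ν).ncard_sub_ncard (negPos ν N)
  rw [hlt, hge, negPos_of_le ν hN le_rfl] at this
  simpa using this

def vacuumMaya (c : ℤ) : ℤ → ℤ := fun q => if -c ≤ q then -1 else 1

lemma isMayaFun_vacuumMaya (c : ℤ) : IsMayaFun (vacuumMaya c) :=
  ⟨fun q => by unfold vacuumMaya; split_ifs <;> simp,
    ⟨-c, fun q hq => if_pos hq⟩, ⟨-c - 1, fun q hq => if_neg (by omega)⟩⟩

lemma chargeFun_vacuumMaya (c : ℤ) : chargeFun (vacuumMaya c) = c := by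
  have h := (isMayaFun_vacuumMaya c).ncard_sub_ncard (-c)
  have hlt : {j | j < -c ∧ vacuumMaya c j = -1} = ∅ :=
    Set.eq_empty_of_forall_notMem fun j ⟨hj, hv⟩ => by simp [vacuumMaya, not_le.2 hj] at hv
  have hge : {j | -c ≤ j ∧ vacuumMaya c j = 1} = ∅ :=
    Set.eq_empty_of_forall_notMem fun j ⟨hj, hv⟩ => by simp [vacuumMaya, hj] at hv
  rw [hlt, hge] at h
  simp only [Set.ncard_empty, Nat.cast_zero, sub_zero] at h
  omega

end MayaFunctions

lemma exists_strictMono_range_eq {s : Set ℤ} (hbdd : BddBelow s) (hinf : s.Infinite) :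
    ∃ e : ℕ → ℤ, StrictMono e ∧ Set.range e = s := by
  obtain ⟨N, hN⟩ := hbdd
  set p : ℕ → Prop := fun n => N + n ∈ s
  have hs : (fun n : ℕ => N + (n : ℤ)) '' {n | p n} = s := by
    ext j
    refine ⟨fun ⟨n, hn, hnj⟩ => hnj ▸ hn, fun hj => ⟨(j - N).toNat, ?_, ?_⟩⟩ <;>
      have hNj := hN hj
    · show N + ((j - N).toNat : ℤ) ∈ s
      rwa [show N + ((j - N).toNat : ℤ) = j by omega]
    · simp only
      omega
  have hinf' : {n | p n}.Infinite := fun hfin => hinf (hs ▸ hfin.image _)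
  refine ⟨fun b => N + Nat.nth p b, fun a b hab => by simpa using Nat.nth_strictMono hinf' hab, ?_⟩
  rw [← hs, ← Nat.range_nth_of_infinite hinf', ← Set.range_comp]
  rfl

/-- The partition is read off the enumeration `e 0 < e 1 < ⋯` of the positions where `f = -1`:
charge `0` says exactly that `e b + λ_{b+1} = b`, where `λ_{b+1}` counts the `+1`s after `e b`. -/
theorem exists_mayaFun_eq {f : ℤ → ℤ} (hf : IsMayaFun f) (hc : chargeFun f = 0) :
    ∃ ν, mayaFun ν = f := by
  obtain ⟨N, hN⟩ := hf.2.2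
  obtain ⟨N', hN'⟩ := hf.2.1
  obtain ⟨e, he_mono, he_range⟩ := exists_strictMono_range_eq (s := {j | f j = -1})
    ⟨N, fun j hj => by
      by_contra! h
      have := hN j h.le
      simp only [Set.mem_ofPred_eq] at hj
      omega⟩
    ((Set.Ici_infinite N').mono fun j hj => hN' j hj)
  have hcount : ∀ b, {j | j < e b ∧ f j = -1}.ncard = b := fun b => by
    simpa only [he_range, Set.mem_ofPred_eq] using he_mono.ncard_setOf_lt_mem_range b
  set part : ℕ → ℕ := fun b => {j | e b ≤ j ∧ f j = 1}.ncard
  have hpart : ∀ b : ℕ, (b : ℤ) - part b = e b := fun b => by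
    have := hf.ncard_sub_ncard (e b)
    rw [hc, hcount] at this
    change (b : ℤ) - {j | e b ≤ j ∧ f j = 1}.ncard = e b
    omega
  have hanti : ∀ a b : ℕ, a ≤ b → part b ≤ part a := fun a b hab =>
    Set.ncard_le_ncard (fun j ⟨hj, hfj⟩ => ⟨(he_mono.monotone hab).trans hj, hfj⟩)
      (hf.finite_ge _)
  obtain ⟨K, hK⟩ : N' ∈ Set.range e := he_range ▸ hN' N' le_rfl
  have hzero : ∀ n, K ≤ n → part n = 0 := fun n hn =>
    (Set.ncard_eq_zero (hf.finite_ge _)).2 <| Set.eq_empty_of_forall_notMem fun j ⟨hj, hfj⟩ => by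
      have := hN' j (hK ▸ (he_mono.monotone hn).trans hj)
      omega
  set ν : PartitionSeq := ⟨part, hanti, ⟨K, hzero⟩⟩
  have hneg : negPos ν = e := funext hpart
  refine ⟨ν, funext fun j => ?_⟩
  rcases hf.1 j with hj | hj
  · rw [hj, mayaFun_eq_one_iff, hneg, he_range]
    simp [hj]
  · rw [hj, mayaFun_eq_neg_one_iff, hneg, he_range]
    exact hj

lemma mayaFun_partitionOfMaya {f : ℤ → ℤ} (hf : IsMayaFun f) (hc : chargeFun f = 0) :
    mayaFun (partitionOfMaya f) = f := by
  have h := exists_mayaFun_eq hf hc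
  rw [partitionOfMaya, dif_pos h]
  exact h.choose_spec

section Residues

variable {ℓ : ℕ}

lemma residue_add_mul_lt_zero_iff (i : Fin ℓ) (q : ℤ) : (i : ℤ) + q * ℓ < 0 ↔ q < 0 := by
  have hi : (i : ℤ) < ℓ := by exact_mod_cast i.isLt
  constructor
  · intro h
    by_contra! hq
    nlinarith [Int.natCast_nonneg (i : ℕ), mul_nonneg hq (Int.natCast_nonneg ℓ)]
  · intro hq
    nlinarith

lemma residue_add_mul_emod (i : Fin ℓ) (q : ℤ) : ((i : ℤ) + q * ℓ) % ℓ = i := by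
  rw [Int.add_mul_emod_self_right]
  exact Int.emod_eq_of_lt (Int.natCast_nonneg _) (by exact_mod_cast i.isLt)

variable [NeZero ℓ]

lemma residue_add_mul_ediv (i : Fin ℓ) (q : ℤ) : ((i : ℤ) + q * ℓ) / ℓ = q := by
  rw [Int.add_mul_ediv_right _ _ (by exact_mod_cast NeZero.ne ℓ),
    Int.ediv_eq_zero_of_lt (Int.natCast_nonneg _) (by exact_mod_cast i.isLt), zero_add]

lemma exists_eq_residue_add_mul (j : ℤ) : ∃ (i : Fin ℓ) (q : ℤ), j = i + q * ℓ := by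
  have hℓ : (0 : ℤ) < ℓ := by exact_mod_cast NeZero.pos ℓ
  have h0 := Int.emod_nonneg j hℓ.ne'
  have h1 := Int.emod_lt_of_pos j hℓ
  refine ⟨⟨(j % ℓ).toNat, by omega⟩, j / ℓ, ?_⟩
  have := Int.ediv_mul_add_emod j ℓ
  simp only [Int.toNat_of_nonneg h0]
  linarith

lemma isMayaFun_of_residues {f : ℤ → ℤ} (h : ∀ i : Fin ℓ, IsMayaFun fun q => f (i + q * ℓ)) :
    IsMayaFun f := by
  have hℓ : (0 : ℤ) < ℓ := by exact_mod_cast NeZero.pos ℓ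
  obtain ⟨Q, hQ⟩ := eventually_atTop.1 <|
    eventually_all.2 fun i => eventually_atTop.2 (h i).2.1
  obtain ⟨Q', hQ'⟩ := eventually_atBot.1 <|
    eventually_all.2 fun i => eventually_atBot.2 (h i).2.2
  refine ⟨fun j => ?_, ⟨Q * ℓ, fun j hj => ?_⟩, ⟨Q' * ℓ, fun j hj => ?_⟩⟩ <;>
    obtain ⟨i, q, rfl⟩ := exists_eq_residue_add_mul (ℓ := ℓ) j
  · exact (h i).1 q
  · have hi : (i : ℤ) < ℓ := by exact_mod_cast i.isLt
    exact hQ q (by nlinarith) i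
  · exact hQ' q (by nlinarith [Int.natCast_nonneg (i : ℕ)]) i

variable (ℓ)

lemma finsum_eq_sum_residues {M : Type*} [AddCommMonoid M] {g : ℤ → M}
    (hg : g.HasFiniteSupport) : ∑ᶠ j, g j = ∑ i : Fin ℓ, ∑ᶠ q : ℤ, g (i + q * ℓ) := by
  let e : Fin ℓ × ℤ ≃ ℤ := (Equiv.prodComm _ _).trans (Int.divModEquiv ℓ).symm
  have he : ∀ p, e p = p.1 + p.2 * ℓ := fun p => by simp [e, add_comm]
  rw [← finsum_comp_equiv e, finsum_curry (fun p => g (e p)) (hg.comp_of_injective e.injective),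
    finsum_eq_sum_of_fintype]
  simp only [he]

lemma ncard_eq_sum_residues {s : Set ℤ} (hs : s.Finite) :
    s.ncard = ∑ i : Fin ℓ, {q : ℤ | (i : ℤ) + q * ℓ ∈ s}.ncard := by
  simp_rw [← finsum_one]
  exact finsum_eq_sum_residues ℓ (hs.subset fun j hj => by by_contra h; simp [h] at hj)

lemma IsMayaFun.chargeFun_eq_sum_residues {f : ℤ → ℤ} (hf : IsMayaFun f) :
    chargeFun f = ∑ i : Fin ℓ, chargeFun fun q => f (i + q * ℓ) := by
  rw [chargeFun, ncard_eq_sum_residues ℓ (hf.finite_lt 0), ncard_eq_sum_residues ℓ (hf.finite_ge 0)]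
  push_cast
  rw [← sum_sub_distrib]
  refine sum_congr rfl fun i _ => ?_
  simp only [chargeFun, Set.mem_ofPred_eq, ← not_lt, residue_add_mul_lt_zero_iff]

end Residues

section Quotients

variable (ℓ : ℕ) [NeZero ℓ]

lemma mayaFun_quotComp (lam : PartitionSeq) (i : ℤ) :
    mayaFun (quotComp ℓ lam i) = fun q => mayaFun lam (i + (q - chargeQuot ℓ lam i) * ℓ) := by
  have hres := (isMayaFun_mayaFun lam).comp_add_mul (ℓ := ℓ) i
  exact mayaFun_partitionOfMaya (hres.comp_sub _) ((hres.chargeFun_comp_sub _).trans (sub_self _))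

lemma sum_chargeQuot (lam : PartitionSeq) : ∑ i : Fin ℓ, chargeQuot ℓ lam i = 0 := by
  rw [← chargeFun_mayaFun lam, (isMayaFun_mayaFun lam).chargeFun_eq_sum_residues ℓ]
  rfl

lemma mayaFun_coreOf (lam : PartitionSeq) :
    mayaFun (coreOf ℓ lam) = fun j => vacuumMaya (chargeQuot ℓ lam (j % ℓ)) (j / ℓ) := by
  have hres : ∀ i : Fin ℓ, (fun q => vacuumMaya (chargeQuot ℓ lam ((i + q * ℓ) % ℓ))
      ((i + q * ℓ) / ℓ)) = vacuumMaya (chargeQuot ℓ lam i) := fun i => by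
    simp only [residue_add_mul_emod, residue_add_mul_ediv]
  have hmaya : IsMayaFun fun j => vacuumMaya (chargeQuot ℓ lam (j % ℓ)) (j / ℓ) :=
    isMayaFun_of_residues fun i => hres i ▸ isMayaFun_vacuumMaya _
  have hcharge : chargeFun (fun j => vacuumMaya (chargeQuot ℓ lam (j % ℓ)) (j / ℓ)) = 0 := by
    rw [hmaya.chargeFun_eq_sum_residues ℓ, ← sum_chargeQuot ℓ lam]
    simp only [hres, chargeFun_vacuumMaya]
  exact mayaFun_partitionOfMaya hmaya hcharge

lemma chargeQuot_eq_of_coreOf_eq {lam mu : PartitionSeq} (hcore : coreOf ℓ lam = coreOf ℓ mu)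
    (i : Fin ℓ) : chargeQuot ℓ lam i = chargeQuot ℓ mu i := by
  have h := congrArg mayaFun hcore
  rw [mayaFun_coreOf, mayaFun_coreOf] at h
  have := congrArg chargeFun (funext fun q => congrFun h (i + q * ℓ))
  simpa only [residue_add_mul_emod, residue_add_mul_ediv, chargeFun_vacuumMaya] using this

end Quotients

section Weight

noncomputable def mayaWeight (f : ℤ → ℤ) (M : ℤ) : ℤ := ∑ᶠ j, if f j = -1 then max (M - j) 0 else 0

lemma IsMayaFun.hasFiniteSupport_weight {f : ℤ → ℤ} (hf : IsMayaFun f) (M : ℤ) :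
    (fun j => if f j = -1 then max (M - j) 0 else 0).HasFiniteSupport := by
  refine (hf.finite_lt M).subset fun j hj => ?_
  by_contra h
  simp only [Set.mem_ofPred_eq, not_and_or, not_lt] at h
  rcases h with h | h
  · simp [Function.mem_support, max_eq_right (sub_nonpos.2 h)] at hj
  · simp [Function.mem_support, h] at hj

lemma mayaWeight_comp_add (f : ℤ → ℤ) (c M : ℤ) :
    mayaWeight (fun q => f (q + c)) M = mayaWeight f (M + c) := by
  rw [mayaWeight, mayaWeight]
  conv_rhs => rw [← finsum_comp_equiv (Equiv.addRight c)]
  simp only [Equiv.coe_addRight, add_sub_add_right_eq_sub]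

lemma max_mul_add_zero_eq {ℓ r : ℤ} (hr₀ : 0 ≤ r) (hrℓ : r ≤ ℓ) (t : ℤ) :
    max (t * ℓ + r) 0 = (ℓ - r) * max t 0 + r * max (t + 1) 0 := by
  rcases le_or_gt 0 t with ht | ht
  · rw [max_eq_left (by nlinarith), max_eq_left ht, max_eq_left (by omega)]
    ring
  · rw [max_eq_right (by nlinarith), max_eq_right ht.le, max_eq_right (by omega)]
    ring

lemma IsMayaFun.mayaWeight_eq_sum_residues {f : ℤ → ℤ} (hf : IsMayaFun f) (ℓ : ℕ) [NeZero ℓ]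
    (M : ℤ) : mayaWeight f M = ∑ i : Fin ℓ,
      ((ℓ - (M - i) % ℓ) * mayaWeight (fun q => f (i + q * ℓ)) ((M - i) / ℓ)
        + (M - i) % ℓ * mayaWeight (fun q => f (i + q * ℓ)) ((M - i) / ℓ + 1)) := by
  have hℓ : (0 : ℤ) < ℓ := by exact_mod_cast NeZero.pos ℓ
  rw [mayaWeight, finsum_eq_sum_residues ℓ (hf.hasFiniteSupport_weight M)]
  refine sum_congr rfl fun i _ => ?_
  have hres := hf.comp_add_mul (ℓ := ℓ) i
  set s := (M - i) / ℓ
  set r := (M - i) % ℓ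
  have hsplit : ∀ q : ℤ, M - (i + q * ℓ) = (s - q) * ℓ + r := fun q => by
    have := Int.ediv_mul_add_emod (M - i) ℓ
    linarith
  have hr₀ : 0 ≤ r := Int.emod_nonneg _ hℓ.ne'
  have hrℓ : r ≤ ℓ := (Int.emod_lt_of_pos _ hℓ).le
  rw [mayaWeight, mayaWeight, mul_finsum, mul_finsum,
    ← finsum_add_distrib ((hres.hasFiniteSupport_weight _).fun_mul_right _)
      ((hres.hasFiniteSupport_weight _).fun_mul_right _)]
  refine finsum_congr fun q => ?_
  rw [hsplit, max_mul_add_zero_eq hr₀ hrℓ]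
  split_ifs <;> ring_nf

end Weight

lemma size_eq_sum_range (ν : PartitionSeq) {n : ℕ} (hn : ∀ m, n ≤ m → ν.part m = 0) :
    Partition.size ν = ∑ b ∈ range n, ν.part b := by
  have hset : {x | Partition.memYD ν x}
      = ↑((range n).biUnion fun b => Icc (1 : ℤ) (ν.part b) ×ˢ {(b : ℤ) + 1}) := by
    ext ⟨a, c⟩
    simp only [Set.mem_ofPred_eq, Partition.memYD, coe_biUnion, coe_range, Set.mem_Iio,
      Set.mem_iUnion, coe_product, coe_Icc, coe_singleton, Set.mem_prod, Set.mem_Icc,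
      Set.mem_singleton_iff, exists_prop]
    constructor
    · rintro ⟨ha, hc, hac⟩
      refine ⟨(c - 1).toNat, ?_, ⟨ha, hac⟩, by omega⟩
      by_contra! h
      rw [hn _ h] at hac
      omega
    · rintro ⟨b, -, ⟨ha, hab⟩, rfl⟩
      exact ⟨ha, by omega, by simpa using hab⟩
  rw [Partition.size, hset, Set.ncard_coe_finset, card_biUnion]
  · simp
  · intro b _ b' _ hbb'
    simp only [Function.onFun, disjoint_left, mem_product, mem_singleton]
    intro x hx hx'
    exact hbb' (by omega)

section PartitionWeight

variable (ν : PartitionSeq)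

lemma mayaWeight_mayaFun (M : ℤ) :
    mayaWeight (mayaFun ν) M = ∑ᶠ b : ℕ, max (M - negPos ν b) 0 := by
  rw [mayaWeight, ← finsum_mem_range (f := fun j => max (M - j) 0) (negPos_strictMono ν).injective,
    finsum_mem_def]
  refine finsum_congr fun j => ?_
  by_cases hj : j ∈ Set.range (negPos ν)
  · simp [Set.indicator_of_mem hj, (mayaFun_eq_neg_one_iff ν j).2 hj]
  · simp [Set.indicator_of_notMem hj, (mayaFun_eq_one_iff ν j).2 hj]

lemma mayaWeight_mayaFun_eq_sum_max {n : ℕ} {M : ℤ} (hn : ∀ b, n ≤ b → M ≤ negPos ν b) :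
    mayaWeight (mayaFun ν) M = ∑ b ∈ range n, max (M - negPos ν b) 0 := by
  rw [mayaWeight_mayaFun]
  refine finsum_eq_sum_of_support_subset _ fun b hb => ?_
  by_contra h
  simp only [coe_range, Set.mem_Iio, not_lt] at h
  simp [max_eq_right (sub_nonpos.2 (hn b h))] at hb

lemma mayaWeight_mayaFun_eq_sum {k : ℕ} {M : ℤ} (hlow : ∀ b < k, negPos ν b ≤ M)
    (hhigh : ∀ b, k ≤ b → M ≤ negPos ν b) :
    mayaWeight (mayaFun ν) M = ∑ b ∈ range k, (M - negPos ν b) := by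
  rw [mayaWeight_mayaFun_eq_sum_max ν hhigh]
  exact sum_congr rfl fun b hb => max_eq_left (sub_nonneg.2 (hlow b (mem_range.1 hb)))

lemma sum_range_le_mayaWeight (k : ℕ) (M : ℤ) :
    ∑ b ∈ range k, (M - negPos ν b) ≤ mayaWeight (mayaFun ν) M := by
  obtain ⟨n, -, hn⟩ := exists_negPos_cut ν M
  rw [mayaWeight_mayaFun_eq_sum_max ν (n := max k n) fun b hb => hn b (le_of_max_le_right hb)]
  calc ∑ b ∈ range k, (M - negPos ν b) ≤ ∑ b ∈ range k, max (M - negPos ν b) 0 :=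
        sum_le_sum fun _ _ => le_max_left _ _
    _ ≤ ∑ b ∈ range (max k n), max (M - negPos ν b) 0 :=
        sum_le_sum_of_subset_of_nonneg (range_subset_range.2 (le_max_left _ _))
          fun _ _ _ => le_max_right _ _

lemma sum_range_sub_negPos (k : ℕ) (M : ℤ) :
    ∑ b ∈ range k, (M - negPos ν b) = ∑ b ∈ range k, (M - b) + ∑ b ∈ range k, (ν.part b : ℤ) := by
  rw [← sum_add_distrib]
  exact sum_congr rfl fun b _ => by simp only [negPos]; ring

lemma mayaWeight_mayaFun_eq_size_add {N : ℕ} (hN : ∀ n, N ≤ n → ν.part n = 0) {M : ℤ}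
    (hM : (N : ℤ) ≤ M) :
    mayaWeight (mayaFun ν) M = Partition.size ν + ∑ b ∈ range M.toNat, (M - b) := by
  rw [mayaWeight_mayaFun_eq_sum ν (k := M.toNat)
      (fun b hb => (negPos_le ν b).trans (by omega))
      (fun b hb => by rw [negPos_of_le ν hN (by omega)]; omega),
    sum_range_sub_negPos, size_eq_sum_range ν (n := M.toNat) fun m hm => hN m (by omega)]
  push_cast
  ring

end PartitionWeight

lemma mayaWeight_le_of_sum_le {mu lam : PartitionSeq}
    (h : ∀ k, ∑ b ∈ range k, mu.part b ≤ ∑ b ∈ range k, lam.part b) (M : ℤ) :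
    mayaWeight (mayaFun mu) M ≤ mayaWeight (mayaFun lam) M := by
  obtain ⟨k, hlow, hhigh⟩ := exists_negPos_cut mu M
  have hk : (∑ b ∈ range k, mu.part b : ℤ) ≤ ∑ b ∈ range k, (lam.part b : ℤ) := by
    exact_mod_cast h k
  calc mayaWeight (mayaFun mu) M = ∑ b ∈ range k, (M - negPos mu b) :=
        mayaWeight_mayaFun_eq_sum mu (fun b hb => (hlow b hb).le) hhigh
    _ ≤ ∑ b ∈ range k, (M - negPos lam b) := by
        rw [sum_range_sub_negPos, sum_range_sub_negPos]
        linarith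
    _ ≤ mayaWeight (mayaFun lam) M := sum_range_le_mayaWeight lam k M

lemma sum_le_of_mayaWeight_le {mu lam : PartitionSeq}
    (h : ∀ M, mayaWeight (mayaFun mu) M ≤ mayaWeight (mayaFun lam) M) (k : ℕ) :
    ∑ b ∈ range k, mu.part b ≤ ∑ b ∈ range k, lam.part b := by
  set M := negPos lam k
  have hlam : mayaWeight (mayaFun lam) M = ∑ b ∈ range k, (M - negPos lam b) :=
    mayaWeight_mayaFun_eq_sum lam (fun b hb => ((negPos_strictMono lam) hb).le)
      (fun b hb => (negPos_strictMono lam).monotone hb)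
  have := (sum_range_le_mayaWeight mu k M).trans ((h M).trans hlam.le)
  rw [sum_range_sub_negPos, sum_range_sub_negPos] at this
  exact_mod_cast (add_le_add_iff_left _).1 this

lemma eventually_mayaWeight_eq_iff {ν ν' : PartitionSeq} :
    (∀ᶠ M in atTop, mayaWeight (mayaFun ν) M = mayaWeight (mayaFun ν') M)
      ↔ Partition.size ν = Partition.size ν' := by
  obtain ⟨N, hN⟩ := ν.eventually_zero
  obtain ⟨N', hN'⟩ := ν'.eventually_zero
  have hform : ∀ᶠ M in atTop, mayaWeight (mayaFun ν) M - mayaWeight (mayaFun ν') M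
      = Partition.size ν - Partition.size ν' := by
    filter_upwards [eventually_ge_atTop (max N N' : ℤ)] with M hM
    rw [mayaWeight_mayaFun_eq_size_add ν hN (le_of_max_le_left hM),
      mayaWeight_mayaFun_eq_size_add ν' hN' (le_of_max_le_right hM)]
    ring
  constructor
  · intro h
    obtain ⟨M, hM, hM'⟩ := (h.and hform).exists
    rw [hM, sub_self] at hM'
    omega
  · intro h
    filter_upwards [hform] with M hM
    rw [h, sub_self] at hM
    exact sub_eq_zero.1 hM

section QuotientWeight

variable (ℓ : ℕ) [NeZero ℓ]

lemma mayaWeight_mayaFun_eq_sum_quotComp (ν : PartitionSeq) (M : ℤ) :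
    mayaWeight (mayaFun ν) M = ∑ i : Fin ℓ,
      ((ℓ - (M - i) % ℓ) * mayaWeight (mayaFun (quotComp ℓ ν i)) ((M - i) / ℓ + chargeQuot ℓ ν i)
        + (M - i) % ℓ
          * mayaWeight (mayaFun (quotComp ℓ ν i)) ((M - i) / ℓ + chargeQuot ℓ ν i + 1)) := by
  rw [(isMayaFun_mayaFun ν).mayaWeight_eq_sum_residues ℓ]
  refine sum_congr rfl fun i _ => ?_
  have hres : (fun q => mayaFun ν (i + q * ℓ))
      = fun q => mayaFun (quotComp ℓ ν i) (q + chargeQuot ℓ ν i) := by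
    simp [mayaFun_quotComp]
  rw [hres, mayaWeight_comp_add, mayaWeight_comp_add, add_right_comm _ 1]

lemma mayaWeight_le_of_quotComp {mu lam : PartitionSeq}
    (hc : ∀ i : Fin ℓ, chargeQuot ℓ mu i = chargeQuot ℓ lam i)
    (h : ∀ (i : Fin ℓ) (M : ℤ), mayaWeight (mayaFun (quotComp ℓ mu i)) M
      ≤ mayaWeight (mayaFun (quotComp ℓ lam i)) M) (M : ℤ) :
    mayaWeight (mayaFun mu) M ≤ mayaWeight (mayaFun lam) M := by
  have hℓ : (0 : ℤ) < ℓ := by exact_mod_cast NeZero.pos ℓ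
  rw [mayaWeight_mayaFun_eq_sum_quotComp ℓ mu, mayaWeight_mayaFun_eq_sum_quotComp ℓ lam]
  gcongr with i
  · linarith [Int.emod_lt_of_pos (M - i) hℓ]
  · rw [hc]
    exact h i _
  · exact Int.emod_nonneg _ hℓ.ne'
  · rw [hc]
    exact h i _

lemma tendsto_sub_ediv_add_atTop (a c : ℤ) :
    Tendsto (fun M : ℤ => (M - a) / ℓ + c) atTop atTop := by
  have hℓ : (0 : ℤ) < ℓ := by exact_mod_cast NeZero.pos ℓ
  refine tendsto_atTop_atTop.2 fun b => ⟨(b - c) * ℓ + a, fun M hM => ?_⟩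
  have : b - c ≤ (M - a) / ℓ := (Int.le_ediv_iff_mul_le hℓ).2 (by linarith)
  linarith

lemma eventually_mayaWeight_eq_of_quotComp {mu lam : PartitionSeq}
    (hc : ∀ i : Fin ℓ, chargeQuot ℓ mu i = chargeQuot ℓ lam i)
    (h : ∀ i : Fin ℓ, ∀ᶠ M in atTop, mayaWeight (mayaFun (quotComp ℓ mu i)) M
      = mayaWeight (mayaFun (quotComp ℓ lam i)) M) :
    ∀ᶠ M in atTop, mayaWeight (mayaFun mu) M = mayaWeight (mayaFun lam) M := by
  have hlarge := fun i : Fin ℓ => tendsto_sub_ediv_add_atTop ℓ i (chargeQuot ℓ mu i)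
  filter_upwards [eventually_all.2 fun i => (hlarge i).eventually (h i),
    eventually_all.2 fun i => (tendsto_atTop_add_const_right _ 1 (hlarge i)).eventually (h i)]
    with M h₀ h₁
  rw [mayaWeight_mayaFun_eq_sum_quotComp ℓ mu, mayaWeight_mayaFun_eq_sum_quotComp ℓ lam]
  simp only [← hc, h₀, h₁]

end QuotientWeight

end Wreath

theorem quotient_dominance (ℓ : ℕ) (hℓ : 1 ≤ ℓ) (lam mu : PartitionSeq)
    (hcore : coreOf ℓ lam = coreOf ℓ mu)
    (h : ∀ i : ℕ, i < ℓ →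
      Partition.size (quotComp ℓ lam (i : ℤ)) = Partition.size (quotComp ℓ mu (i : ℤ)) ∧
      Dom (quotComp ℓ mu (i : ℤ)) (quotComp ℓ lam (i : ℤ))) :
    Partition.size mu = Partition.size lam ∧ Dom mu lam := by
  have : NeZero ℓ := ⟨by omega⟩
  have hc i := (chargeQuot_eq_of_coreOf_eq ℓ hcore i).symm
  have hsize : Partition.size mu = Partition.size lam :=
    eventually_mayaWeight_eq_iff.1 <| eventually_mayaWeight_eq_of_quotComp ℓ hc fun i =>
      eventually_mayaWeight_eq_iff.2 (h i i.isLt).1.symm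
  refine ⟨hsize, hsize, sum_le_of_mayaWeight_le ?_⟩
  exact mayaWeight_le_of_quotComp ℓ hc fun i => mayaWeight_le_of_sum_le (h i i.isLt).2.2
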